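/- arXiv:1310.1656 — 6 statements merged into one kernel-verified Lean document; each statement's English description precedes it below -/
import Mathlib

section
/- Let H be a 3×3 positive semidefinite Hermitian matrix such that 6·det(H) > tr(adj(H)). Then H is positive definite and 6·H − I is positive definite. -/
/-!
Diagonalise `H` unitarily: `det H` and `tr (adj H)` are the top two elementary symmetric
functions `e₃, e₂` of the eigenvalues, and `6 • H - 1` is diagonalised by the same unitary.
For nonnegative `λᵢ`, the single term `∏_{j ≠ i} λⱼ` of `e₂` already gives
`∏_{j ≠ i} λⱼ ≤ e₂ < 6 e₃ = 6 λᵢ ∏_{j ≠ i} λⱼ`, forcing `1 < 6 λᵢ` for every `i`.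
-/

open ComplexOrder Matrix Finset

theorem Matrix.trace_adjugate_mul_mul_of_mul_eq_one {n R : Type*} [Fintype n] [DecidableEq n]
    [CommRing R] {A B C : Matrix n n R} (h : C * A = 1) :
    (A * B * C).adjugate.trace = B.adjugate.trace := by
  rw [adjugate_mul_distrib, adjugate_mul_distrib, trace_mul_comm, mul_assoc,
    ← adjugate_mul_distrib, h, adjugate_one, mul_one]

theorem one_lt_mul_of_sum_prod_erase_lt {ι : Type*} [Fintype ι] [DecidableEq ι]
    {x : ι → ℝ} (hx : ∀ i, 0 ≤ x i) {k : ℝ}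
    (h : ∑ i, ∏ j ∈ univ.erase i, x j < k * ∏ i, x i) (i : ι) : 1 < k * x i := by
  set P := ∏ j ∈ univ.erase i, x j
  have hP : 0 ≤ P := prod_nonneg fun j _ ↦ hx j
  have hsum : P ≤ ∑ i, ∏ j ∈ univ.erase i, x j :=
    single_le_sum (f := fun i ↦ ∏ j ∈ univ.erase i, x j)
      (fun i _ ↦ prod_nonneg fun j _ ↦ hx j) (mem_univ i)
  rw [← mul_prod_erase univ x (mem_univ i)] at h
  by_contra! hle
  nlinarith [mul_le_mul_of_nonneg_right hle hP]

namespace Matrix.IsHermitian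

variable {n 𝕜 : Type*} [Fintype n] [DecidableEq n] [RCLike 𝕜] {A : Matrix n n 𝕜}

theorem trace_adjugate_eq_sum_prod_eigenvalues (hA : A.IsHermitian) :
    A.adjugate.trace = ∑ i, ∏ j ∈ univ.erase i, (hA.eigenvalues j : 𝕜) := by
  conv_lhs => rw [hA.spectral_theorem, Unitary.conjStarAlgAut_apply,
    trace_adjugate_mul_mul_of_mul_eq_one (Unitary.coe_star_mul_self _), adjugate_diagonal,
    trace_diagonal]
  simp

theorem posDef_smul_sub_one_iff (hA : A.IsHermitian) (k : ℝ) :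
    ((k : 𝕜) • A - 1).PosDef ↔ ∀ i, 1 < k * hA.eigenvalues i := by
  conv_lhs => rw [hA.spectral_theorem,
    ← map_one (Unitary.conjStarAlgAut 𝕜 _ hA.eigenvectorUnitary), ← map_smul, ← map_sub,
    Unitary.conjStarAlgAut_apply,
    Unitary.isUnit_coe.posDef_star_right_conjugate_iff, ← diagonal_one, ← diagonal_smul,
    diagonal_sub, posDef_diagonal_iff]
  refine forall_congr' fun i ↦ ?_
  rw [Pi.smul_apply, Function.comp_apply, smul_eq_mul, ← RCLike.ofReal_mul, ← RCLike.ofReal_one,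
    ← RCLike.ofReal_sub, RCLike.ofReal_pos, sub_pos]

end Matrix.IsHermitian

theorem Matrix.PosSemidef.one_lt_mul_eigenvalues_of_re_trace_adjugate_lt {n 𝕜 : Type*}
    [Fintype n] [DecidableEq n] [RCLike 𝕜] {A : Matrix n n 𝕜} (hA : A.PosSemidef) {k : ℝ}
    (h : RCLike.re A.adjugate.trace < k * RCLike.re A.det) (i : n) :
    1 < k * hA.isHermitian.eigenvalues i := by
  refine one_lt_mul_of_sum_prod_erase_lt hA.eigenvalues_nonneg ?_ i
  simpa only [hA.isHermitian.trace_adjugate_eq_sum_prod_eigenvalues,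
    hA.isHermitian.det_eq_prod_eigenvalues, ← RCLike.ofReal_prod, map_sum, RCLike.ofReal_re]
    using h

/-- If `H` is a 3×3 positive semidefinite Hermitian matrix with
`6·det H > tr (adj H)`, then `H` is positive definite and `6·H − I` is positive definite. -/
theorem stmt_2 (H : Matrix (Fin 3) (Fin 3) ℂ) (hH : H.PosSemidef)
    (h : 6 * H.det.re > H.adjugate.trace.re) :
    H.PosDef ∧ ((6 : ℂ) • H - 1).PosDef := by
  have hlt := hH.one_lt_mul_eigenvalues_of_re_trace_adjugate_lt (k := 6) h
  refine ⟨hH.isHermitian.posDef_iff_eigenvalues_pos.mpr fun i ↦ ?_,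
    (hH.isHermitian.posDef_smul_sub_one_iff 6).mpr hlt⟩
  linarith [hlt i]
end

section
/- The function H ↦ tr(H)/det(H) is convex on the set of 3×3 positive definite Hermitian matrices; that is, for all positive definite Hermitian H₁, H₂ and all t ∈ [0,1], tr(tH₁+(1−t)H₂)/det(tH₁+(1−t)H₂) ≤ t·tr(H₁)/det(H₁) + (1−t)·tr(H₂)/det(H₂). -/
/-!
Write `H₁ = Qᴴ Q` and `H₂ = Qᴴ diag(d) Q` with `d > 0` (simultaneous diagonalisation: `Q = Uᴴ B`
where `H₁ = Bᴴ B` and the unitary `U` diagonalises `(B⁻¹)ᴴ H₂ B⁻¹`). Then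
`t H₁ + (1 - t) H₂ = Qᴴ diag(x) Q` with `x = t • 1 + (1 - t) • d`, and for such matrices
`tr / det = |det Q|⁻² ∑ᵢ wᵢ ∏_{j ≠ i} xⱼ⁻¹` with `wᵢ = ∑ⱼ |Qᵢⱼ|² ≥ 0`. Each
`∏ xⱼ⁻¹ = exp (-∑ log xⱼ)` is log-convex, hence convex, on the positive orthant, and so is this
function of `x`.
-/

open Set Real ComplexOrder

theorem ConvexOn.finset_sum {𝕜 E β ι : Type*} [Semiring 𝕜] [PartialOrder 𝕜] [AddCommMonoid E]
    [AddCommMonoid β] [PartialOrder β] [IsOrderedAddMonoid β] [SMul 𝕜 E] [Module 𝕜 β]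
    {s : Set E} (hs : Convex 𝕜 s) {t : Finset ι} {f : ι → E → β}
    (hf : ∀ i ∈ t, ConvexOn 𝕜 s (f i)) : ConvexOn 𝕜 s fun x ↦ ∑ i ∈ t, f i x := by
  classical
  induction t using Finset.induction_on with
  | empty => simpa using convexOn_const (0 : β) hs
  | insert i t hi ih =>
    simp only [Finset.sum_insert hi]
    exact (hf i (t.mem_insert_self i)).add (ih fun j hj ↦ hf j (Finset.mem_insert_of_mem hj))

theorem ConvexOn.exp {E : Type*} [AddCommMonoid E] [Module ℝ E] {s : Set E} {f : E → ℝ}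
    (hf : ConvexOn ℝ s f) : ConvexOn ℝ s fun x ↦ exp (f x) :=
  ⟨hf.1, fun _ hx _ hy _ _ ha hb hab ↦
    (exp_le_exp.2 (hf.2 hx hy ha hb hab)).trans (convexOn_exp.2 trivial trivial ha hb hab)⟩

section Orthant

variable {ι : Type*}

theorem convex_pi_Ioi_zero : Convex ℝ (univ.pi fun _ : ι ↦ Ioi (0 : ℝ)) :=
  convex_pi fun _ _ ↦ convex_Ioi 0

theorem convexOn_prod_inv (t : Finset ι) :
    ConvexOn ℝ (univ.pi fun _ : ι ↦ Ioi (0 : ℝ)) fun x ↦ ∏ i ∈ t, (x i)⁻¹ := by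
  have hlog : ConvexOn ℝ (univ.pi fun _ : ι ↦ Ioi (0 : ℝ)) fun x ↦ ∑ i ∈ t, -log (x i) :=
    ConvexOn.finset_sum convex_pi_Ioi_zero fun i _ ↦
      (strictConcaveOn_log_Ioi.concaveOn.neg.comp_linearMap
        (LinearMap.proj (R := ℝ) (φ := fun _ : ι ↦ ℝ) i)).subset
        (fun _ hx ↦ mem_univ_pi.mp hx i) convex_pi_Ioi_zero
  refine hlog.exp.congr fun x hx ↦ ?_
  simp [exp_sum, exp_neg, exp_log (hx _ (mem_univ _))]

theorem convexOn_sum_mul_div_prod [Fintype ι] [DecidableEq ι] {w : ι → ℝ} (hw : ∀ i, 0 ≤ w i) :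
    ConvexOn ℝ (univ.pi fun _ : ι ↦ Ioi (0 : ℝ)) fun x ↦ (∑ i, w i * x i) / ∏ i, x i := by
  refine (ConvexOn.finset_sum (t := Finset.univ) convex_pi_Ioi_zero fun i _ ↦
    (convexOn_prod_inv (Finset.univ.erase i)).smul (hw i)).congr fun x hx ↦ ?_
  simp only [Finset.sum_div, smul_eq_mul]
  refine Finset.sum_congr rfl fun i _ ↦ ?_
  rw [← Finset.mul_prod_erase _ _ (Finset.mem_univ i), Finset.prod_inv_distrib, mul_comm (x i),
    mul_div_mul_right _ _ (hx i (mem_univ i)).ne', div_eq_mul_inv]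

end Orthant

namespace Matrix

variable {n : Type*}

theorem convex_setOf_posDef : Convex ℝ {H : Matrix n n ℂ | H.PosDef} := by
  intro H₁ h₁ H₂ h₂ a b ha hb hab
  rcases ha.eq_or_lt with rfl | ha
  · simpa [show b = 1 by linarith] using h₂
  · exact (PosDef.smul h₁ ha).add_posSemidef (h₂.posSemidef.smul hb)

variable [Fintype n] [DecidableEq n]

theorem PosDef.exists_isUnit_eq_conjTranspose_mul_self {H : Matrix n n ℂ} (h : H.PosDef) :
    ∃ B : Matrix n n ℂ, IsUnit B ∧ H = Bᴴ * B := by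
  open scoped MatrixOrder in
  exact CStarAlgebra.isStrictlyPositive_iff_eq_star_mul_self.mp h.isStrictlyPositive

theorem PosDef.exists_eq_conjTranspose_mul_mul {H B : Matrix n n ℂ} (h : H.PosDef)
    (hB : IsUnit B) : ∃ M : Matrix n n ℂ, M.PosDef ∧ H = Bᴴ * M * B := by
  have hB' : IsUnit B⁻¹ := (isUnit_nonsing_inv_iff).2 hB
  refine ⟨B⁻¹ᴴ * H * B⁻¹, (IsUnit.posDef_star_left_conjugate_iff hB').2 h, ?_⟩
  have hBB : B⁻¹ * B = 1 := nonsing_inv_mul B ((isUnit_iff_isUnit_det B).1 hB)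
  rw [← mul_assoc, ← mul_assoc, ← conjTranspose_mul, mul_assoc, hBB]
  simp

theorem PosDef.exists_simultaneous_diagonalization {H₁ H₂ : Matrix n n ℂ} (h₁ : H₁.PosDef)
    (h₂ : H₂.PosDef) : ∃ (Q : Matrix n n ℂ) (d : n → ℝ),
      (∀ i, 0 < d i) ∧ H₁ = Qᴴ * Q ∧ H₂ = Qᴴ * diagonal (fun i ↦ (d i : ℂ)) * Q := by
  obtain ⟨B, hB, rfl⟩ := h₁.exists_isUnit_eq_conjTranspose_mul_self
  obtain ⟨M, hM, rfl⟩ := h₂.exists_eq_conjTranspose_mul_mul hB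
  set U : Matrix n n ℂ := (hM.isHermitian.eigenvectorUnitary : Matrix n n ℂ)
  have hUU : U * Uᴴ = 1 := Unitary.coe_mul_star_self _
  have hspec : M = U * diagonal (fun i ↦ (hM.isHermitian.eigenvalues i : ℂ)) * star U :=
    hM.isHermitian.spectral_theorem
  refine ⟨star U * B, hM.isHermitian.eigenvalues, hM.eigenvalues_pos, ?_, ?_⟩
  · rw [conjTranspose_mul, star_eq_conjTranspose, conjTranspose_conjTranspose, mul_assoc,
      ← mul_assoc U, hUU, one_mul]
  · conv_lhs => rw [hspec]
    simp only [conjTranspose_mul, star_eq_conjTranspose, conjTranspose_conjTranspose, mul_assoc]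

theorem re_trace_conjTranspose_mul_diagonal_mul (Q : Matrix n n ℂ) (x : n → ℝ) :
    (Qᴴ * diagonal (fun i ↦ (x i : ℂ)) * Q).trace.re =
      ∑ i, (∑ j, Complex.normSq (Q i j)) * x i := by
  rw [trace_mul_cycle, trace, Complex.re_sum]
  refine Finset.sum_congr rfl fun i _ ↦ ?_
  rw [diag_apply, mul_diagonal, mul_apply]
  simp only [conjTranspose_apply, Complex.star_def, Complex.mul_conj, ← Complex.ofReal_sum,
    ← Complex.ofReal_mul, Complex.ofReal_re]

theorem re_det_conjTranspose_mul_diagonal_mul (Q : Matrix n n ℂ) (x : n → ℝ) :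
    (Qᴴ * diagonal (fun i ↦ (x i : ℂ)) * Q).det.re = Complex.normSq Q.det * ∏ i, x i := by
  rw [det_mul, det_mul, det_conjTranspose, det_diagonal, mul_comm, ← mul_assoc, Complex.star_def,
    Complex.mul_conj, ← Complex.ofReal_prod, ← Complex.ofReal_mul, Complex.ofReal_re]

theorem smul_add_smul_conjTranspose_mul_diagonal_mul (Q : Matrix n n ℂ) (x y : n → ℝ)
    (a b : ℝ) :
    a • (Qᴴ * diagonal (fun i ↦ (x i : ℂ)) * Q) + b • (Qᴴ * diagonal (fun i ↦ (y i : ℂ)) * Q) =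
      Qᴴ * diagonal (fun i ↦ ((a • x + b • y) i : ℂ)) * Q := by
  have hdiag : diagonal (fun i ↦ ((a • x + b • y) i : ℂ)) =
      a • diagonal (fun i ↦ (x i : ℂ)) + b • diagonal (fun i ↦ (y i : ℂ)) := by
    ext i j
    by_cases h : i = j <;> simp [h]
  rw [hdiag, mul_add, add_mul, Matrix.mul_smul, Matrix.mul_smul, Matrix.smul_mul, Matrix.smul_mul]

/- No invertibility of `Q` is needed: for singular `Q` both the determinant and the factor
`(normSq Q.det)⁻¹` vanish, and `x / 0 = 0`. -/
theorem convexOn_re_trace_div_re_det_conjTranspose_mul_diagonal_mul (Q : Matrix n n ℂ) :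
    ConvexOn ℝ (univ.pi fun _ : n ↦ Ioi (0 : ℝ)) fun x ↦
      (Qᴴ * diagonal (fun i ↦ (x i : ℂ)) * Q).trace.re /
        (Qᴴ * diagonal (fun i ↦ (x i : ℂ)) * Q).det.re := by
  refine ((convexOn_sum_mul_div_prod fun i ↦ Finset.sum_nonneg (s := Finset.univ) fun j _ ↦
    Complex.normSq_nonneg (Q i j)).smul (inv_nonneg.2 (Complex.normSq_nonneg Q.det))).congr
    fun x _ ↦ ?_
  rw [re_trace_conjTranspose_mul_diagonal_mul, re_det_conjTranspose_mul_diagonal_mul,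
    div_mul_eq_div_div_swap, div_eq_inv_mul _ (Complex.normSq Q.det)]
  rfl

theorem convexOn_re_trace_div_re_det :
    ConvexOn ℝ {H : Matrix n n ℂ | H.PosDef} fun H ↦ H.trace.re / H.det.re := by
  refine ⟨convex_setOf_posDef, fun H₁ h₁ H₂ h₂ a b ha hb hab ↦ ?_⟩
  obtain ⟨Q, d, hd, rfl, rfl⟩ := PosDef.exists_simultaneous_diagonalization h₁ h₂
  have h1 : Qᴴ * Q = Qᴴ * diagonal (fun i ↦ ((1 : n → ℝ) i : ℂ)) * Q := by simp
  rw [h1, smul_add_smul_conjTranspose_mul_diagonal_mul]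
  exact (convexOn_re_trace_div_re_det_conjTranspose_mul_diagonal_mul Q).2
    (fun _ _ ↦ zero_lt_one' ℝ) (fun i _ ↦ hd i) ha hb hab

end Matrix

/-- The function `H ↦ tr H / det H` is convex on the set of 3×3 positive definite
Hermitian matrices. -/
theorem stmt_3 (H₁ H₂ : Matrix (Fin 3) (Fin 3) ℂ)
    (h1 : H₁.PosDef) (h2 : H₂.PosDef) (t : ℝ) (ht : t ∈ Set.Icc (0 : ℝ) 1) :
    ((t : ℂ) • H₁ + ((1 - t : ℝ) : ℂ) • H₂).trace.re /
        ((t : ℂ) • H₁ + ((1 - t : ℝ) : ℂ) • H₂).det.re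
      ≤ t * (H₁.trace.re / H₁.det.re) + (1 - t) * (H₂.trace.re / H₂.det.re) := by
  simpa only [Complex.coe_smul, smul_eq_mul] using
    Matrix.convexOn_re_trace_div_re_det.2 h1 h2 ht.1 (sub_nonneg.2 ht.2) (add_sub_cancel t 1)
end

section
/- The function H ↦ 1/det(H) is convex on the set of 3×3 positive definite Hermitian matrices; that is, for all positive definite Hermitian H₁, H₂ and all t ∈ [0,1], 1/det(tH₁+(1−t)H₂) ≤ t/det(H₁) + (1−t)/det(H₂). -/
/-!
Write `A = S²` with `S = √A` and `B = S C S` with `C` positive definite, of eigenvalues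
`μᵢ > 0`. Then `a A + b B = S (a + b C) S`, so `det (a A + b B) = det A * ∏ (a + b μᵢ)` and
`det B = det A * ∏ μᵢ`.
Weighted AM-GM on each factor, `μᵢ ^ b ≤ a + b μᵢ`, gives the log-concavity
`det A ^ a * det B ^ b ≤ det (a A + b B)`, and one more weighted AM-GM turns this into convexity
of `1 / det`.
-/

open ComplexOrder

theorem Real.rpow_prod_le_prod_add_mul {ι : Type*} (s : Finset ι) {μ : ι → ℝ}
    (hμ : ∀ i ∈ s, 0 ≤ μ i) {a b : ℝ} (ha : 0 ≤ a) (hb : 0 ≤ b) (hab : a + b = 1) :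
    (∏ i ∈ s, μ i) ^ b ≤ ∏ i ∈ s, (a + b * μ i) := by
  rw [← Real.finsetProd_rpow s μ hμ]
  refine Finset.prod_le_prod (fun i hi => Real.rpow_nonneg (hμ i hi) b) fun i hi => ?_
  simpa using Real.geom_mean_le_arith_mean2_weighted ha hb zero_le_one (hμ i hi) hab

namespace Matrix

variable {n 𝕜 : Type*} [Fintype n] [DecidableEq n] [RCLike 𝕜]

theorem IsHermitian.det_smul_one_add_smul {A : Matrix n n 𝕜} (hA : A.IsHermitian) (a b : 𝕜) :
    det (a • 1 + b • A) = ∏ i, (a + b * hA.eigenvalues i) := by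
  set U := hA.eigenvectorUnitary
  have hU : det (U : Matrix n n 𝕜) * det (star U : Matrix n n 𝕜) = 1 := by
    rw [← det_mul, mem_unitaryGroup_iff.mp U.2, det_one]
  have hdiag : a • 1 + b • diagonal (RCLike.ofReal ∘ hA.eigenvalues) =
      diagonal fun i => a + b * hA.eigenvalues i := by
    ext i j
    rcases eq_or_ne i j with rfl | h <;> simp [*]
  conv_lhs => rw [hA.spectral_theorem]
  rw [← map_one (Unitary.conjStarAlgAut 𝕜 _ U), ← map_smul, ← map_smul,
    ← map_add, Unitary.conjStarAlgAut_apply, det_mul, det_mul, hdiag, det_diagonal,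
    mul_right_comm, hU, one_mul]

open MatrixOrder in
theorem PosDef.exists_det_smul_add_smul_eq_prod {A B : Matrix n n 𝕜} (hA : A.PosDef)
    (hB : B.PosDef) :
    ∃ μ : n → ℝ, (∀ i, 0 < μ i) ∧
      ∀ a b : 𝕜, det (a • A + b • B) = det A * ∏ i, (a + b * μ i) := by
  set S := CFC.sqrt A
  have hSS : S * S = A := CFC.sqrt_mul_sqrt_self A hA.posSemidef.nonneg
  have hS : S.IsHermitian := (nonneg_iff_posSemidef.mp (CFC.sqrt_nonneg A)).isHermitian
  have hSu : IsUnit S := isUnit_of_mul_isUnit_left (hSS ▸ hA.isUnit)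
  set C := S⁻¹ * B * S⁻¹
  have hC : C.PosDef := by
    have := (IsUnit.posDef_star_left_conjugate_iff (isUnit_nonsing_inv_iff.mpr hSu)).mpr hB
    rwa [star_eq_conjTranspose, hS.inv.eq] at this
  have hSCS : S * C * S = B := by
    simp only [C, ← mul_assoc, mul_nonsing_inv _ ((isUnit_iff_isUnit_det S).mp hSu), one_mul]
    rw [mul_assoc, nonsing_inv_mul _ ((isUnit_iff_isUnit_det S).mp hSu), mul_one]
  refine ⟨hC.isHermitian.eigenvalues, hC.eigenvalues_pos, fun a b => ?_⟩
  have hpencil : a • A + b • B = S * (a • 1 + b • C) * S := by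
    rw [← hSS, ← hSCS, mul_add, add_mul, Matrix.mul_smul, Matrix.smul_mul, Matrix.mul_smul,
      Matrix.smul_mul, mul_one]
  rw [hpencil, det_mul, det_mul, hC.isHermitian.det_smul_one_add_smul, ← hSS, det_mul]
  ring

theorem PosDef.re_det_rpow_mul_re_det_rpow_le {A B : Matrix n n 𝕜} (hA : A.PosDef)
    (hB : B.PosDef) {a b : ℝ} (ha : 0 ≤ a) (hb : 0 ≤ b) (hab : a + b = 1) :
    RCLike.re (det A) ^ a * RCLike.re (det B) ^ b ≤
      RCLike.re (det ((a : 𝕜) • A + (b : 𝕜) • B)) := by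
  obtain ⟨μ, hμ, hdet⟩ := hA.exists_det_smul_add_smul_eq_prod hB
  obtain ⟨α, hα, hαA⟩ := RCLike.pos_iff_exists_ofReal.mp hA.det_pos
  have hdetB : det B = ((α * ∏ i, μ i : ℝ) : 𝕜) := by
    simpa [← hαA] using hdet 0 1
  have hdetM : det ((a : 𝕜) • A + (b : 𝕜) • B) = ((α * ∏ i, (a + b * μ i) : ℝ) : 𝕜) := by
    rw [hdet, ← hαA, RCLike.ofReal_mul, RCLike.ofReal_prod]
    simp only [RCLike.ofReal_add, RCLike.ofReal_mul]
  rw [hdetB, hdetM, ← hαA, RCLike.ofReal_re, RCLike.ofReal_re, RCLike.ofReal_re,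
    Real.mul_rpow hα.le (Finset.prod_nonneg fun i _ => (hμ i).le), ← mul_assoc,
    ← Real.rpow_add hα, hab, Real.rpow_one]
  exact mul_le_mul_of_nonneg_left
    (Real.rpow_prod_le_prod_add_mul _ (fun i _ => (hμ i).le) ha hb hab) hα.le

theorem PosDef.one_div_re_det_smul_add_smul_le {A B : Matrix n n 𝕜} (hA : A.PosDef)
    (hB : B.PosDef) {a b : ℝ} (ha : 0 ≤ a) (hb : 0 ≤ b) (hab : a + b = 1) :
    1 / RCLike.re (det ((a : 𝕜) • A + (b : 𝕜) • B)) ≤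
      a / RCLike.re (det A) + b / RCLike.re (det B) := by
  have hα : 0 < RCLike.re (det A) := (RCLike.pos_iff.mp hA.det_pos).1
  have hβ : 0 < RCLike.re (det B) := (RCLike.pos_iff.mp hB.det_pos).1
  calc 1 / RCLike.re (det ((a : 𝕜) • A + (b : 𝕜) • B))
      ≤ 1 / (RCLike.re (det A) ^ a * RCLike.re (det B) ^ b) :=
        one_div_le_one_div_of_le (by positivity) (hA.re_det_rpow_mul_re_det_rpow_le hB ha hb hab)
    _ = (1 / RCLike.re (det A)) ^ a * (1 / RCLike.re (det B)) ^ b := by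
        rw [Real.div_rpow zero_le_one hα.le, Real.div_rpow zero_le_one hβ.le, Real.one_rpow,
          Real.one_rpow, div_mul_div_comm, one_mul]
    _ ≤ a * (1 / RCLike.re (det A)) + b * (1 / RCLike.re (det B)) :=
        Real.geom_mean_le_arith_mean2_weighted ha hb (by positivity) (by positivity) hab
    _ = a / RCLike.re (det A) + b / RCLike.re (det B) := by ring

end Matrix

/-- The function `H ↦ 1 / det H` is convex on the set of 3×3 positive definite
Hermitian matrices. -/
theorem stmt_4 (H₁ H₂ : Matrix (Fin 3) (Fin 3) ℂ)
    (h1 : H₁.PosDef) (h2 : H₂.PosDef) (t : ℝ) (ht : t ∈ Set.Icc (0 : ℝ) 1) :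
    1 / ((t : ℂ) • H₁ + ((1 - t : ℝ) : ℂ) • H₂).det.re
      ≤ t / H₁.det.re + (1 - t) / H₂.det.re :=
  h1.one_div_re_det_smul_add_smul_le h2 ht.1 (sub_nonneg.mpr ht.2) (add_sub_cancel t 1)
end

section
/- The set S = {H : H is a 3×3 positive definite Hermitian matrix with 6·det(H) > tr(adj(H))} is a convex subset of the real vector space of 3×3 Hermitian matrices. -/
open ComplexOrder

/-!
For positive definite `M`, `Re ⟪v, M⁻¹ v⟫` is the maximum over `x` of `2 Re ⟪v, x⟫ - Re ⟪x, M x⟫`,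
attained at `x = M⁻¹ v` (complete the square in `M`-norm). Being a supremum of functions affine
in `M`, it is convex on the positive definite cone, and summing over the standard basis so is
`Re (tr M⁻¹)`. For positive definite `H` one has `adj H = det H • H⁻¹` with `det H > 0`, so the
condition `6 det H > tr (adj H)` is the sublevel set `Re (tr H⁻¹) < 6` of a convex function.
-/

namespace Matrix

variable {n 𝕜 : Type*} [Fintype n] [DecidableEq n] [RCLike 𝕜]

omit [Fintype n] [DecidableEq n] in
theorem convex_setOf_posDef_s6 : Convex ℝ {M : Matrix n n 𝕜 | M.PosDef} := by
  intro A hA B hB a b ha hb hab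
  rcases ha.eq_or_lt with rfl | ha
  · simpa [show b = 1 by linarith] using hB
  · exact (hA.smul ha).add_posSemidef (hB.posSemidef.smul hb)

theorem PosDef.isUnit_det {M : Matrix n n 𝕜} (hM : M.PosDef) : IsUnit M.det :=
  isUnit_iff_ne_zero.mpr hM.det_pos.ne'

theorem PosDef.mulVec_inv_mulVec {M : Matrix n n 𝕜} (hM : M.PosDef) (v : n → 𝕜) :
    M *ᵥ M⁻¹ *ᵥ v = v := by
  rw [mulVec_mulVec, mul_nonsing_inv _ hM.isUnit_det, one_mulVec]

omit [DecidableEq n] in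
theorem re_star_dotProduct_comm (x v : n → 𝕜) :
    RCLike.re (star x ⬝ᵥ v) = RCLike.re (star v ⬝ᵥ x) := by
  rw [← RCLike.conj_re, ← RCLike.star_def, star_dotProduct, star_star, dotProduct_comm]

theorem PosDef.re_dotProduct_le_re_dotProduct_inv {M : Matrix n n 𝕜} (hM : M.PosDef)
    (v x : n → 𝕜) :
    2 * RCLike.re (star v ⬝ᵥ x) - RCLike.re (star x ⬝ᵥ M *ᵥ x)
      ≤ RCLike.re (star v ⬝ᵥ M⁻¹ *ᵥ v) := by
  set w := M⁻¹ *ᵥ v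
  have hMw : M *ᵥ w = v := hM.mulVec_inv_mulVec v
  have hwMx : star w ⬝ᵥ M *ᵥ x = star v ⬝ᵥ x := by
    rw [dotProduct_mulVec, ← hM.isHermitian.eq, ← star_mulVec, hMw]
  have hsq : star (x - w) ⬝ᵥ M *ᵥ (x - w)
      = star x ⬝ᵥ M *ᵥ x - star x ⬝ᵥ v - star v ⬝ᵥ x + star w ⬝ᵥ v := by
    rw [star_sub, mulVec_sub, sub_dotProduct, dotProduct_sub, dotProduct_sub, hMw, hwMx]
    ring
  have hnonneg := RCLike.nonneg_iff.mp (hM.posSemidef.dotProduct_mulVec_nonneg (x - w))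
  rw [hsq] at hnonneg
  simp only [map_add, map_sub] at hnonneg
  rw [re_star_dotProduct_comm x v, re_star_dotProduct_comm w v] at hnonneg
  linarith [hnonneg.1]

theorem PosDef.re_dotProduct_inv_mulVec_eq {M : Matrix n n 𝕜} (hM : M.PosDef) (v : n → 𝕜) :
    2 * RCLike.re (star v ⬝ᵥ M⁻¹ *ᵥ v) - RCLike.re (star (M⁻¹ *ᵥ v) ⬝ᵥ M *ᵥ M⁻¹ *ᵥ v)
      = RCLike.re (star v ⬝ᵥ M⁻¹ *ᵥ v) := by
  rw [hM.mulVec_inv_mulVec, re_star_dotProduct_comm]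
  ring

theorem convexOn_re_dotProduct_inv_mulVec (v : n → 𝕜) :
    ConvexOn ℝ {M : Matrix n n 𝕜 | M.PosDef} fun M => RCLike.re (star v ⬝ᵥ M⁻¹ *ᵥ v) := by
  refine ⟨convex_setOf_posDef_s6, fun A hA B hB a b ha hb hab => ?_⟩
  have hC : (a • A + b • B).PosDef := convex_setOf_posDef_s6 hA hB ha hb hab
  set x := (a • A + b • B)⁻¹ *ᵥ v
  have hA' := hA.re_dotProduct_le_re_dotProduct_inv v x
  have hB' := hB.re_dotProduct_le_re_dotProduct_inv v x
  have hsplit : RCLike.re (star x ⬝ᵥ (a • A + b • B) *ᵥ x)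
      = a * RCLike.re (star x ⬝ᵥ A *ᵥ x) + b * RCLike.re (star x ⬝ᵥ B *ᵥ x) := by
    simp only [add_mulVec, smul_mulVec, dotProduct_add, dotProduct_smul, map_add, RCLike.smul_re]
  calc RCLike.re (star v ⬝ᵥ (a • A + b • B)⁻¹ *ᵥ v)
      = 2 * RCLike.re (star v ⬝ᵥ x) - RCLike.re (star x ⬝ᵥ (a • A + b • B) *ᵥ x) :=
        (hC.re_dotProduct_inv_mulVec_eq v).symm
    _ = a * (2 * RCLike.re (star v ⬝ᵥ x) - RCLike.re (star x ⬝ᵥ A *ᵥ x))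
        + b * (2 * RCLike.re (star v ⬝ᵥ x) - RCLike.re (star x ⬝ᵥ B *ᵥ x)) := by
        rw [hsplit]; linear_combination (-2 * RCLike.re (star v ⬝ᵥ x)) * hab
    _ ≤ _ := add_le_add (mul_le_mul_of_nonneg_left hA' ha) (mul_le_mul_of_nonneg_left hB' hb)

theorem convexOn_re_trace_inv :
    ConvexOn ℝ {M : Matrix n n 𝕜 | M.PosDef} fun M => RCLike.re M⁻¹.trace := by
  have hdiag (M : Matrix n n 𝕜) : RCLike.re M⁻¹.trace
      = ∑ i, RCLike.re (star (Pi.single i 1) ⬝ᵥ M⁻¹ *ᵥ Pi.single i (1 : 𝕜)) := by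
    simp [trace, mulVec_single, single_dotProduct]
  refine ⟨convex_setOf_posDef_s6, fun A hA B hB a b ha hb hab => ?_⟩
  simp only [hdiag, Finset.smul_sum, ← Finset.sum_add_distrib]
  exact Finset.sum_le_sum fun i _ => (convexOn_re_dotProduct_inv_mulVec _).2 hA hB ha hb hab

theorem adjugate_eq_det_smul_inv {A : Matrix n n 𝕜} (h : IsUnit A.det) :
    A.adjugate = A.det • A⁻¹ := by
  rw [inv_def, smul_smul, Ring.mul_inverse_cancel _ h, one_smul]

theorem PosDef.re_trace_adjugate {H : Matrix n n 𝕜} (hH : H.PosDef) :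
    RCLike.re H.adjugate.trace = RCLike.re H.det * RCLike.re H⁻¹.trace := by
  rw [adjugate_eq_det_smul_inv hH.isUnit_det, trace_smul, smul_eq_mul, RCLike.mul_re,
    (RCLike.pos_iff.mp hH.det_pos).2, zero_mul, sub_zero]

end Matrix

/-- The set of 3×3 positive definite Hermitian matrices `H` with
`6·det H > tr (adj H)` is convex. -/
theorem stmt_6 :
    Convex ℝ {H : Matrix (Fin 3) (Fin 3) ℂ |
      H.PosDef ∧ 6 * H.det.re > H.adjugate.trace.re} := by
  have hS : {H : Matrix (Fin 3) (Fin 3) ℂ | H.PosDef ∧ 6 * H.det.re > H.adjugate.trace.re}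
      = {H ∈ {M | M.PosDef} | RCLike.re H⁻¹.trace < 6} := by
    ext H
    refine and_congr_right fun hH => ?_
    have hdet : 0 < H.det.re := (RCLike.pos_iff.mp hH.det_pos).1
    have hadj := hH.re_trace_adjugate
    simp only [RCLike.re_to_complex] at hadj ⊢
    rw [hadj, gt_iff_lt, mul_comm 6, mul_lt_mul_iff_right₀ hdet]
  rw [hS]
  exact Matrix.convexOn_re_trace_inv.convex_lt 6
end

section
/- Let H₁ and H₂ be 3×3 positive definite Hermitian matrices satisfying 6·det(H_i) > tr(adj(H_i)) for i = 1,2, and set C = 1 − tr(adj(H₁))/(6·det(H₁)), so that C ∈ (0,1) depends only on H₁. Then for every t ∈ [0,1], the matrix H_t = t·H₁ + (1−t)·H₂ satisfies: 6·H_t − (1 + C·t)·I is positive definite. -/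
open ComplexOrder

/-!
For positive definite `H` with eigenvalues `λᵢ`, `tr (adj H) / det H = tr H⁻¹ = ∑ 1 / λᵢ ≥ 1 / λᵢ`,
so `tr (adj H) < κ · det H` forces `H > κ⁻¹`. The hypotheses thus give `6 H₂ > 1`, and, since
`tr (adj H₁) = 6 (1 - C) det H₁ < 6 det H₁ / (1 + C)`, also `6 H₁ > 1 + C`. The matrix in question
is the convex combination `t (6 H₁ - (1 + C)) + (1 - t) (6 H₂ - 1)` of these two.
-/

theorem Finset.prod_le_mul_sum_prod_erase {ι R : Type*} [DecidableEq ι] [CommSemiring R]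
    [PartialOrder R] [IsOrderedRing R] {s : Finset ι} {f : ι → R} (hf : ∀ j ∈ s, 0 ≤ f j)
    {i : ι} (hi : i ∈ s) : ∏ j ∈ s, f j ≤ f i * ∑ k ∈ s, ∏ j ∈ s.erase k, f j := by
  rw [← Finset.mul_prod_erase s f hi]
  refine mul_le_mul_of_nonneg_left ?_ (hf i hi)
  exact Finset.single_le_sum (f := fun k ↦ ∏ j ∈ s.erase k, f j)
    (fun k _ ↦ Finset.prod_nonneg fun j hj ↦ hf j (Finset.mem_of_mem_erase hj)) hi

namespace Matrix

variable {n 𝕜 : Type*} [Fintype n] [DecidableEq n] [RCLike 𝕜]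

theorem IsHermitian.posDef_sub_smul_one_iff {A : Matrix n n 𝕜} (hA : A.IsHermitian) (c : ℝ) :
    (A - c • 1).PosDef ↔ ∀ i, c < hA.eigenvalues i := by
  let U := hA.eigenvectorUnitary
  have hshift : A - c • 1 = (U : Matrix n n 𝕜) * diagonal (fun i ↦ ((hA.eigenvalues i - c : ℝ) : 𝕜))
      * star (U : Matrix n n 𝕜) := by
    have hdiag : diagonal (fun i ↦ ((hA.eigenvalues i - c : ℝ) : 𝕜))
        = diagonal (RCLike.ofReal ∘ hA.eigenvalues) - c • (1 : Matrix n n 𝕜) := by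
      rw [RCLike.real_smul_eq_coe_smul (K := 𝕜), smul_one_eq_diagonal, diagonal_sub]
      congr 1; ext i; simp
    conv_lhs => rw [hA.spectral_theorem, Unitary.conjStarAlgAut_apply]
    rw [hdiag, mul_sub, sub_mul, mul_smul_comm, smul_mul_assoc, mul_one,
      Unitary.mul_star_self_of_mem U.2]
  rw [hshift, IsUnit.posDef_star_right_conjugate_iff Unitary.isUnit_coe, posDef_diagonal_iff]
  simp [sub_pos]

theorem IsHermitian.trace_adjugate {A : Matrix n n 𝕜} (hA : A.IsHermitian) :
    A.adjugate.trace = ∑ i, ∏ j ∈ Finset.univ.erase i, (hA.eigenvalues j : 𝕜) := by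
  conv_lhs => rw [hA.spectral_theorem, Unitary.conjStarAlgAut_apply]
  rw [adjugate_mul_distrib, adjugate_mul_distrib, ← mul_assoc, trace_mul_cycle,
    ← adjugate_mul_distrib, Unitary.star_mul_self_of_mem hA.eigenvectorUnitary.2, adjugate_one,
    one_mul, adjugate_diagonal, trace_diagonal]
  rfl

theorem PosDef.det_re_le_trace_adjugate_re_mul_eigenvalues {A : Matrix n n 𝕜} (hA : A.PosDef)
    (i : n) : RCLike.re A.det ≤ RCLike.re A.adjugate.trace * hA.1.eigenvalues i := by
  rw [hA.1.det_eq_prod_eigenvalues, hA.1.trace_adjugate, mul_comm]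
  simp only [← RCLike.ofReal_prod, ← RCLike.ofReal_sum, RCLike.ofReal_re]
  exact Finset.prod_le_mul_sum_prod_erase (fun j _ ↦ (hA.eigenvalues_pos j).le) (Finset.mem_univ i)

theorem PosDef.re_trace_adjugate_pos [Nonempty n] {A : Matrix n n 𝕜} (hA : A.PosDef) :
    0 < RCLike.re A.adjugate.trace := by
  obtain ⟨i⟩ := ‹Nonempty n›
  have hdet : 0 < RCLike.re A.det := (RCLike.pos_iff.mp hA.det_pos).1
  exact pos_of_mul_pos_left (hdet.trans_le (hA.det_re_le_trace_adjugate_re_mul_eigenvalues i))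
    (hA.eigenvalues_pos i).le

theorem PosDef.posDef_sub_inv_smul_one_of_re_trace_adjugate_lt {A : Matrix n n 𝕜} (hA : A.PosDef)
    {κ : ℝ} (hκ : RCLike.re A.adjugate.trace < κ * RCLike.re A.det) : (A - κ⁻¹ • 1).PosDef := by
  refine hA.1.posDef_sub_smul_one_iff _ |>.2 fun i ↦ ?_
  have hdet : 0 < RCLike.re A.det := (RCLike.pos_iff.mp hA.det_pos).1
  have hev := hA.eigenvalues_pos i
  have hbound := hA.det_re_le_trace_adjugate_re_mul_eigenvalues i
  have : Nonempty n := ⟨i⟩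
  have hκ₀ : 0 < κ := pos_of_mul_pos_left (hA.re_trace_adjugate_pos.trans hκ) hdet.le
  rw [inv_lt_iff_one_lt_mul₀ hκ₀]
  nlinarith

omit [Fintype n] [DecidableEq n] in
theorem convex_setOf_posDef_s7 : Convex ℝ {A : Matrix n n 𝕜 | A.PosDef} := by
  intro A hA B hB a b ha hb hab
  rcases ha.eq_or_lt with rfl | ha
  · rw [zero_add] at hab
    simpa [hab] using hB
  · exact (hA.smul ha).add_posSemidef (hB.posSemidef.smul hb)

end Matrix

/-- If `H₁`, `H₂` are 3×3 positive definite Hermitian matrices with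
`6·det Hᵢ > tr (adj Hᵢ)` and `C = 1 − tr (adj H₁)/(6·det H₁)`, then `C ∈ (0,1)` and
for every `t ∈ [0,1]` the matrix `H_t = t·H₁ + (1−t)·H₂` satisfies
`6·H_t − (1 + C·t)·I > 0`. -/
theorem stmt_7 (H₁ H₂ : Matrix (Fin 3) (Fin 3) ℂ)
    (h1 : H₁.PosDef) (h2 : H₂.PosDef)
    (e1 : 6 * H₁.det.re > H₁.adjugate.trace.re)
    (e2 : 6 * H₂.det.re > H₂.adjugate.trace.re)
    (C : ℝ) (hC : C = 1 - H₁.adjugate.trace.re / (6 * H₁.det.re)) :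
    C ∈ Set.Ioo (0 : ℝ) 1 ∧
    ∀ t ∈ Set.Icc (0 : ℝ) 1,
      ((6 : ℂ) • ((t : ℂ) • H₁ + ((1 - t : ℝ) : ℂ) • H₂)
        - (((1 + C * t : ℝ)) : ℂ) • (1 : Matrix (Fin 3) (Fin 3) ℂ)).PosDef := by
  have hd₁ : 0 < H₁.det.re := (Complex.pos_iff.mp h1.det_pos).1
  have hT₁ : 0 < H₁.adjugate.trace.re := h1.re_trace_adjugate_pos
  have hC₀ : 0 < C := by
    rw [hC, sub_pos, div_lt_one (by positivity)]
    exact e1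
  have hC₁ : C < 1 := by
    rw [hC, sub_lt_self_iff]
    positivity
  refine ⟨⟨hC₀, hC₁⟩, fun t ht ↦ ?_⟩
  have hT₁C : H₁.adjugate.trace.re = 6 * (1 - C) * H₁.det.re := by
    rw [hC]
    field_simp
    ring
  have hshift₁ : (H₁ - ((1 + C) / 6) • 1).PosDef := by
    rw [← inv_div]
    refine h1.posDef_sub_inv_smul_one_of_re_trace_adjugate_lt ?_
    change H₁.adjugate.trace.re < 6 / (1 + C) * H₁.det.re
    rw [hT₁C, div_mul_eq_mul_div, lt_div_iff₀ (by linarith)]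
    nlinarith [mul_pos (mul_pos hC₀ hC₀) hd₁]
  have hshift₂ : (H₂ - (6 : ℝ)⁻¹ • 1).PosDef := h2.posDef_sub_inv_smul_one_of_re_trace_adjugate_lt e2
  have key : (6 : ℂ) • ((t : ℂ) • H₁ + ((1 - t : ℝ) : ℂ) • H₂) - ((1 + C * t : ℝ) : ℂ) • 1
      = (6 : ℝ) • (t • (H₁ - ((1 + C) / 6) • 1) + (1 - t) • (H₂ - (6 : ℝ)⁻¹ • 1)) := by
    module
  rw [key]
  exact (Matrix.convex_setOf_posDef_s7 hshift₁ hshift₂ ht.1 (sub_nonneg.2 ht.2) (add_sub_cancel t 1)).smul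
    (by norm_num : (0 : ℝ) < 6)
end

section
/- For every ε̃ ∈ (0,1) and all real numbers 0 < m ≤ M, there exist ε > 0 and K > 0 such that the following holds: whenever λ₁ ≥ λ₂ ≥ λ₃ > 0 are real numbers, f ∈ [m, M], and a₁, a₂, a₃ ∈ (0, 1−ε̃] satisfy λ₁·λ₂·λ₃ = f + a₁λ₁ + a₂λ₂ + a₃λ₃ and λ₁ + λ₂ + λ₃ ≥ K, then 1/λ₁ + 1/λ₂ + 1/λ₃ ≥ 2 + ε. -/
/-! The equation and the bounds on `f` and the `aᵢ` give
`λ₁λ₂λ₃ ≤ M + (1 - ε̃)λ₁ + λ₂ + λ₃`. If `λ₂` is large, then `λ₂λ₃ ≤ M + 3` forces `λ₃ ≤ 1/3`,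
so `1/λ₃ ≥ 3`. Otherwise `λ₂, λ₃` stay bounded while `λ₁` is large, and dividing by `λ₁` gives
`λ₂λ₃ ≤ 1 - ε̃/2`; by AM-GM, `1/λ₂ + 1/λ₃ ≥ 2/√(λ₂λ₃) ≥ 2 + ε̃/2`. -/

theorem two_add_le_one_div_add_one_div {x y ε : ℝ} (hx : 0 < x) (hy : 0 < y) (hε : 0 ≤ ε)
    (h : x * y ≤ 1 - ε) : 2 + ε ≤ 1 / x + 1 / y := by
  have hxy : 0 < x * y := mul_pos hx hy
  have hsq : ((2 + ε) * (x * y)) ^ 2 ≤ (x + y) ^ 2 :=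
    calc ((2 + ε) * (x * y)) ^ 2 = (2 + ε) ^ 2 * (x * y) * (x * y) := by ring
      _ ≤ (2 + ε) ^ 2 * (x * y) * (1 - ε) := by gcongr
      _ = (4 - 3 * ε ^ 2 - ε ^ 3) * (x * y) := by ring
      _ ≤ 4 * (x * y) := by gcongr; nlinarith [pow_nonneg hε 3]
      _ ≤ (x + y) ^ 2 := by nlinarith [sq_nonneg (x - y)]
  have hlin : (2 + ε) * (x * y) ≤ x + y :=
    (pow_le_pow_iff_left₀ (by positivity) (by positivity) two_ne_zero).mp hsq
  rw [div_add_div _ _ hx.ne' hy.ne', le_div_iff₀ hxy]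
  linarith

theorem two_add_half_le_sum_one_div_of_le_middle {C δ x y z : ℝ} (hC : 0 ≤ C)
    (hδ : δ ∈ Set.Icc 0 2) (hzy : z ≤ y) (hyx : y ≤ x) (hz : 0 < z)
    (h : x * y * z ≤ C + (1 - δ) * x + y + z) (hy : 3 * (C + 3) ≤ y) :
    2 + δ / 2 ≤ 1 / x + 1 / y + 1 / z := by
  obtain ⟨hδ0, hδ2⟩ := hδ
  have hx : 1 ≤ x := by linarith
  have hyz : y * z ≤ C + 3 := by
    have : x * (y * z) ≤ x * (C + 3) := by nlinarith
    exact le_of_mul_le_mul_left this (by linarith)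
  have hz3 : z ≤ 1 / 3 := by nlinarith
  have : 3 ≤ 1 / z := by rw [le_div_iff₀ hz]; linarith
  have : 0 < 1 / x := by positivity
  have : 0 < 1 / y := one_div_pos.mpr (lt_of_lt_of_le hz hzy)
  linarith

/-- Here `C + y + z < 7 * C + 18`, so the bound on `x` makes `(C + y + z) / x < δ / 2`. -/
theorem two_add_half_le_sum_one_div_of_middle_lt {C δ x y z : ℝ} (hC : 0 ≤ C) (hδ : 0 < δ)
    (hzy : z ≤ y) (hz : 0 < z) (h : x * y * z ≤ C + (1 - δ) * x + y + z) (hy : y < 3 * (C + 3))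
    (hx : 2 * (7 * C + 18) / δ < x) :
    2 + δ / 2 ≤ 1 / x + 1 / y + 1 / z := by
  have hx0 : 0 < x := lt_of_le_of_lt (by positivity) hx
  have hyz : y * z ≤ 1 - δ / 2 := by
    have hδx : 2 * (7 * C + 18) < δ * x := by rwa [div_lt_iff₀' hδ] at hx
    have : x * (y * z) ≤ x * (1 - δ / 2) := by nlinarith
    exact le_of_mul_le_mul_left this hx0
  have := two_add_le_one_div_add_one_div (lt_of_lt_of_le hz hzy) hz (by positivity) hyz
  have : 0 < 1 / x := by positivity
  linarith

theorem two_add_half_le_sum_one_div {C δ x y z : ℝ} (hC : 0 ≤ C) (hδ : δ ∈ Set.Ioc 0 2)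
    (hzy : z ≤ y) (hyx : y ≤ x) (hz : 0 < z) (h : x * y * z ≤ C + (1 - δ) * x + y + z)
    (hK : 6 * (C + 3) + 2 * (7 * C + 18) / δ ≤ x + y + z) :
    2 + δ / 2 ≤ 1 / x + 1 / y + 1 / z := by
  rcases le_or_gt (3 * (C + 3)) y with hy | hy
  · exact two_add_half_le_sum_one_div_of_le_middle hC (Set.Ioc_subset_Icc_self hδ) hzy hyx hz h hy
  · exact two_add_half_le_sum_one_div_of_middle_lt hC hδ.1 hzy hz h hy (by linarith)

/-- Quantitative reciprocal-eigenvalue lemma: for `ε̃ ∈ (0,1)` and `0 < m ≤ M` there are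
`ε > 0` and `K > 0` such that whenever `λ₁ ≥ λ₂ ≥ λ₃ > 0`, `f ∈ [m,M]`,
`a₁,a₂,a₃ ∈ (0, 1−ε̃]`, `λ₁λ₂λ₃ = f + a₁λ₁ + a₂λ₂ + a₃λ₃` and `λ₁+λ₂+λ₃ ≥ K`, we have
`1/λ₁ + 1/λ₂ + 1/λ₃ ≥ 2 + ε`. -/
theorem stmt_8 (εt : ℝ) (hεt : εt ∈ Set.Ioo (0 : ℝ) 1)
    (m M : ℝ) (hm : 0 < m) (hmM : m ≤ M) :
    ∃ ε > (0 : ℝ), ∃ K > (0 : ℝ),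
      ∀ l1 l2 l3 f a1 a2 a3 : ℝ,
        l1 ≥ l2 → l2 ≥ l3 → l3 > 0 →
        f ∈ Set.Icc m M →
        a1 ∈ Set.Ioc (0 : ℝ) (1 - εt) → a2 ∈ Set.Ioc (0 : ℝ) (1 - εt) →
        a3 ∈ Set.Ioc (0 : ℝ) (1 - εt) →
        l1 * l2 * l3 = f + a1 * l1 + a2 * l2 + a3 * l3 →
        l1 + l2 + l3 ≥ K →
        1 / l1 + 1 / l2 + 1 / l3 ≥ 2 + ε := by
  obtain ⟨hεt0, hεt1⟩ := hεt
  have hM : 0 ≤ M := by linarith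
  refine ⟨εt / 2, by positivity, 6 * (M + 3) + 2 * (7 * M + 18) / εt, by positivity, ?_⟩
  intro l1 l2 l3 f a1 a2 a3 h12 h23 h3 hf ha1 ha2 ha3 heq hK
  have hbound : l1 * l2 * l3 ≤ M + (1 - εt) * l1 + l2 + l3 := by
    have e1 := mul_le_mul_of_nonneg_right ha1.2 (by linarith : 0 ≤ l1)
    have e2 : a2 * l2 ≤ l2 := mul_le_of_le_one_left (by linarith) (by linarith [ha2.2])
    have e3 : a3 * l3 ≤ l3 := mul_le_of_le_one_left h3.le (by linarith [ha3.2])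
    linarith [hf.2]
  exact two_add_half_le_sum_one_div hM ⟨hεt0, by linarith⟩ h23 h12 h3 hbound hK
end
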